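/- arXiv:2004.01129 — 5 statements merged into one kernel-verified Lean document; each statement's English description precedes it below -/
import Mathlib

section
/- K-fractional revival occurs in X at time τ if and only if there exists a partition P of the index set {0,1,…,d} of distinct eigenvalues such that (i) for each class C of P, the matrix Σ_{r∈C} E_r commutes with D_K, and (ii) e^{-iτθ_r} = e^{-iτθ_s} whenever r and s belong to the same class of P. -/
/-!
With `c r = exp (-i τ θ r)`, the spectral decomposition gives `U(τ) = ∑ r, c r • E r`. The sums
`∑_{c r = z} E r` are then polynomials in `U(τ)` (Lagrange interpolation on the finitely many
values of `c`), so whatever commutes with `U(τ)` commutes with each of them: this is the partition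
into the level sets of `c`. Conversely, if `c` is constant on the classes of a partition, `U(τ)` is
a linear combination of the class sums, so it commutes with whatever they all commute with.
-/

open Matrix

noncomputable def transU {n : ℕ} (A : Matrix (Fin n) (Fin n) ℝ) (t : ℝ) :
    Matrix (Fin n) (Fin n) ℂ :=
  NormedSpace.exp ((-Complex.I * (t : ℂ)) • A.map (Complex.ofReal))

def DKmat {n : ℕ} (K : Finset (Fin n)) : Matrix (Fin n) (Fin n) ℝ :=
  Matrix.of fun i j => if i = j ∧ i ∈ K then 1 else 0

open Finset Polynomial

variable {ι A : Type*} [Fintype ι] {e : ι → A}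

namespace CompleteOrthogonalIdempotents

def piAlgHom {R : Type*} [CommSemiring R] [Semiring A] [Algebra R A]
    (he : CompleteOrthogonalIdempotents e) : (ι → R) →ₐ[R] A where
  toFun f := ∑ i, f i • e i
  map_one' := by simpa using he.complete
  map_mul' f g := by
    classical
    simp only [Pi.mul_apply, sum_mul_sum, smul_mul_smul_comm, he.mul_eq, smul_ite, smul_zero,
      sum_ite_eq, mem_univ, if_true]
  map_zero' := by simp
  map_add' f g := by simp [add_smul, sum_add_distrib]
  commutes' r := by simp [Algebra.algebraMap_eq_smul_one, ← smul_sum, he.complete]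

theorem piAlgHom_apply {R : Type*} [CommSemiring R] [Semiring A] [Algebra R A]
    (he : CompleteOrthogonalIdempotents e) (f : ι → R) :
    he.piAlgHom f = ∑ i, f i • e i := rfl

theorem exp_sum_smul {𝕜 : Type*} [RCLike 𝕜] [NormedRing A] [NormedAlgebra 𝕜 A]
    (he : CompleteOrthogonalIdempotents e) (a : ι → 𝕜) :
    NormedSpace.exp (∑ i, a i • e i) = ∑ i, NormedSpace.exp (a i) • e i := by
  have hcont : Continuous (he.piAlgHom (R := 𝕜)) :=
    continuous_finsetSum _ fun i _ => (continuous_apply i).smul continuous_const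
  have := NormedSpace.map_exp_of_mem_ball (𝕂 := 𝕜) he.piAlgHom hcont a
    (by simp [NormedSpace.expSeries_radius_eq_top])
  rwa [Pi.exp_def, piAlgHom_apply, piAlgHom_apply, eq_comm] at this

theorem commute_piAlgHom_comp {𝕜 : Type*} [Field 𝕜] [Ring A] [Algebra 𝕜 A]
    (he : CompleteOrthogonalIdempotents e) {x : A} {c : ι → 𝕜}
    (hx : Commute (he.piAlgHom c) x) (f : 𝕜 → 𝕜) : Commute (he.piAlgHom (f ∘ c)) x := by
  classical
  obtain ⟨p, hp⟩ : ∃ p : 𝕜[X], aeval c p = f ∘ c := by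
    refine ⟨Lagrange.interpolate (univ.image c) id f, funext fun i => ?_⟩
    rw [aeval_pi_apply₂, coe_aeval_eq_eval]
    exact Lagrange.eval_interpolate_at_node f (Set.injOn_id _) (mem_image_of_mem c (mem_univ i))
  have hmem : he.piAlgHom c ∈ Subalgebra.centralizer 𝕜 {x} := by
    simpa [Subalgebra.mem_centralizer_iff] using hx.eq.symm
  have := Algebra.adjoin_le (Set.singleton_subset_iff.mpr hmem)
    (aeval_mem_adjoin_singleton 𝕜 (he.piAlgHom c) (p := p))
  rw [aeval_algHom_apply, hp, Subalgebra.mem_centralizer_iff] at this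
  exact (this x rfl).symm

theorem commute_sum_filter_eq {𝕜 : Type*} [Field 𝕜] [DecidableEq 𝕜] [Ring A] [Algebra 𝕜 A]
    (he : CompleteOrthogonalIdempotents e) {x : A} {c : ι → 𝕜}
    (hx : Commute (∑ i, c i • e i) x) (z : 𝕜) : Commute (∑ i with c i = z, e i) x := by
  simpa [piAlgHom_apply, sum_filter, ite_smul] using
    he.commute_piAlgHom_comp hx (fun w => if w = z then 1 else 0)

end CompleteOrthogonalIdempotents

namespace Finpartition

theorem sum_sum_parts {α M : Type*} [DecidableEq α] [AddCommMonoid M] {s : Finset α}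
    (P : Finpartition s) (f : α → M) : ∑ C ∈ P.parts, ∑ i ∈ C, f i = ∑ i ∈ s, f i :=
  (sum_biUnion P.disjoint).symm.trans (by rw [P.biUnion_parts])

theorem commute_sum_smul {R : Type*} [CommSemiring R] [Semiring A] [Algebra R A] [DecidableEq ι]
    (P : Finpartition (univ : Finset ι)) {c : ι → R} {x : A}
    (hc : ∀ C ∈ P.parts, ∀ r ∈ C, ∀ s ∈ C, c r = c s)
    (he : ∀ C ∈ P.parts, Commute (∑ r ∈ C, e r) x) : Commute (∑ r, c r • e r) x := by
  rw [← P.sum_sum_parts]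
  refine Commute.sum_left _ _ _ fun C hC => ?_
  obtain ⟨r, hr⟩ := P.nonempty_of_mem_parts hC
  rw [sum_congr rfl fun s hs => by rw [hc C hC s hs r hr], ← smul_sum]
  exact (he C hC).smul_left (c r)

theorem exists_eq_filter_of_mem_ofSetoid_ker [DecidableEq ι] {β : Type*} [DecidableEq β]
    {f : ι → β} [DecidableRel (Setoid.ker f).r] {C : Finset ι}
    (hC : C ∈ (ofSetoid (Setoid.ker f)).parts) : ∃ r ∈ C, C = ({s | f s = f r} : Finset ι) := by
  obtain ⟨r, hr⟩ := (ofSetoid (Setoid.ker f)).nonempty_of_mem_parts hC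
  refine ⟨r, hr, ?_⟩
  ext s
  rw [← part_eq_of_mem _ hC hr, mem_part_ofSetoid_iff_rel]
  simp [eq_comm]

end Finpartition

section

-- `NormedSpace.exp` only sees the topology, so any matrix norm inducing it will do.
attribute [local instance] Matrix.linftyOpNormedRing Matrix.linftyOpNormedAlgebra

theorem transU_eq_sum {n : ℕ} (A : Matrix (Fin n) (Fin n) ℝ) (θ : ι → ℝ)
    (E : ι → Matrix (Fin n) (Fin n) ℝ) (hA : A = ∑ r, θ r • E r)
    (hE : CompleteOrthogonalIdempotents E) (t : ℝ) :
    transU A t = ∑ r, Complex.exp (-Complex.I * t * θ r) • (E r).map Complex.ofReal := by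
  have hEℂ : CompleteOrthogonalIdempotents fun r => (E r).map Complex.ofReal :=
    hE.map (Complex.ofRealHom.mapMatrix (m := Fin n))
  have harg : (-Complex.I * t) • A.map Complex.ofReal
      = ∑ r, (-Complex.I * t * θ r) • (E r).map Complex.ofReal := by
    ext i j
    simp [hA, Matrix.sum_apply, mul_sum, mul_assoc]
  rw [transU, harg, Complex.exp_eq_exp_ℂ]
  exact hEℂ.exp_sum_smul _

end

theorem kfr_iff_commuting_partition_general {n d : ℕ} (A : Matrix (Fin n) (Fin n) ℝ)
    (θ : Fin (d + 1) → ℝ) (E : Fin (d + 1) → Matrix (Fin n) (Fin n) ℝ)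
    (hA : A = ∑ r, θ r • E r)
    (hidem : ∀ r, E r * E r = E r)
    (horth : ∀ r s, r ≠ s → E r * E s = 0)
    (hsum : ∑ r, E r = 1)
    (K : Finset (Fin n)) (τ : ℝ) :
    (transU A τ * (DKmat K).map Complex.ofReal
        = (DKmat K).map Complex.ofReal * transU A τ) ↔
      ∃ P : Finpartition (Finset.univ : Finset (Fin (d + 1))),
        (∀ C ∈ P.parts, (∑ r ∈ C, E r) * DKmat K = DKmat K * (∑ r ∈ C, E r)) ∧
        (∀ C ∈ P.parts, ∀ r ∈ C, ∀ s ∈ C,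
          Complex.exp (-Complex.I * τ * θ r) = Complex.exp (-Complex.I * τ * θ s)) := by
  classical
  have hE : CompleteOrthogonalIdempotents E := ⟨⟨hidem, horth⟩, hsum⟩
  have hEℂ : CompleteOrthogonalIdempotents fun r => (E r).map Complex.ofReal :=
    hE.map (Complex.ofRealHom.mapMatrix (m := Fin n))
  have hcomplexify (C : Finset (Fin (d + 1))) :
      (∑ r ∈ C, E r) * DKmat K = DKmat K * (∑ r ∈ C, E r) ↔
        Commute (∑ r ∈ C, (E r).map Complex.ofReal) ((DKmat K).map Complex.ofReal) := by
    have := commute_map_iff (f := Complex.ofRealHom.mapMatrix (m := Fin n))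
      (Matrix.map_injective Complex.ofReal_injective) (x := ∑ r ∈ C, E r) (y := DKmat K)
    rw [map_sum] at this
    exact this.symm
  simp only [hcomplexify, transU_eq_sum A θ E hA hE τ, ← commute_iff_eq]
  constructor
  · intro hU
    refine ⟨.ofSetoid (Setoid.ker fun r => Complex.exp (-Complex.I * τ * θ r)), fun C hC => ?_,
      fun C hC r hr s hs => ?_⟩ <;>
    obtain ⟨r₀, -, rfl⟩ := Finpartition.exists_eq_filter_of_mem_ofSetoid_ker hC
    · exact hEℂ.commute_sum_filter_eq hU _
    · simp only [mem_filter] at hr hs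
      rw [hr.2, hs.2]
  · rintro ⟨P, hPE, hPc⟩
    exact P.commute_sum_smul hPc hPE

/-- K-fractional revival at time τ (i.e. `U(τ)` commutes with `D_K`) holds iff
there is a partition of the eigenvalue indices whose class-sums of idempotents
commute with `D_K` and on whose classes `e^{-iτθ}` is constant. -/
theorem kfr_iff_commuting_partition {n d : ℕ} (A : Matrix (Fin n) (Fin n) ℝ)
    (θ : Fin (d + 1) → ℝ) (E : Fin (d + 1) → Matrix (Fin n) (Fin n) ℝ)
    (hA : A = ∑ r, θ r • E r) (hθ : Function.Injective θ)
    (hsymm : ∀ r, (E r).IsSymm)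
    (hidem : ∀ r, E r * E r = E r)
    (horth : ∀ r s, r ≠ s → E r * E s = 0)
    (hsum : ∑ r, E r = 1)
    (K : Finset (Fin n)) (τ : ℝ) :
    (transU A τ * (DKmat K).map Complex.ofReal
        = (DKmat K).map Complex.ofReal * transU A τ) ↔
      ∃ P : Finpartition (Finset.univ : Finset (Fin (d + 1))),
        (∀ C ∈ P.parts, (∑ r ∈ C, E r) * DKmat K = DKmat K * (∑ r ∈ C, E r)) ∧
        (∀ C ∈ P.parts, ∀ r ∈ C, ∀ s ∈ C,
          Complex.exp (-Complex.I * τ * θ r) = Complex.exp (-Complex.I * τ * θ s)) :=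
  kfr_iff_commuting_partition_general A θ E hA hidem horth hsum K τ
end

section
/- Let P_min^K = {C_1,…,C_ℓ} be the minimal partition commuting with D_K and E_{C_j} = Σ_{r∈C_j} E_r. Then the number of indices j with E_{C_j} D_K ≠ 0 is at most |K|. -/
open Matrix

def CommutesWithDK {n d : ℕ} (E : Fin (d + 1) → Matrix (Fin n) (Fin n) ℝ)
    (K : Finset (Fin n))
    (P : Finpartition (Finset.univ : Finset (Fin (d + 1)))) : Prop :=
  ∀ C ∈ P.parts, (∑ r ∈ C, E r) * DKmat K = DKmat K * (∑ r ∈ C, E r)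

lemma DKmat_eq_diagonal {n : ℕ} (K : Finset (Fin n)) :
    DKmat K = Matrix.diagonal (fun i => if i ∈ K then (1 : ℝ) else 0) := by
  ext i j
  by_cases h : i = j
  · subst h
    by_cases hK : i ∈ K <;> simp [DKmat, hK]
  · simp [DKmat, h, Matrix.diagonal_apply_ne _ h]

lemma DKmat_mul_DKmat {n : ℕ} (K : Finset (Fin n)) : DKmat K * DKmat K = DKmat K := by
  rw [DKmat_eq_diagonal, Matrix.diagonal_mul_diagonal]
  have h : (fun i => (if i ∈ K then (1 : ℝ) else 0) * (if i ∈ K then (1 : ℝ) else 0)) =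
      fun i => if i ∈ K then (1 : ℝ) else 0 := by
    funext i
    by_cases h : i ∈ K <;> simp [h]
  rw [h]

lemma DKmat_transpose {n : ℕ} (K : Finset (Fin n)) : (DKmat K)ᵀ = DKmat K := by
  rw [DKmat_eq_diagonal, Matrix.diagonal_transpose]

lemma DKmat_apply_of_not_mem {n : ℕ} (K : Finset (Fin n)) {i : Fin n} (hi : i ∉ K) (j : Fin n) :
    DKmat K i j = 0 := by
  simp [DKmat, hi]

open scoped Classical in
/-- The number of classes of the minimal commuting partition whose class-sum of
idempotents does not annihilate `D_K` is at most `|K|`. -/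
theorem card_support_classes_le {n d : ℕ} (A : Matrix (Fin n) (Fin n) ℝ)
    (θ : Fin (d + 1) → ℝ) (E : Fin (d + 1) → Matrix (Fin n) (Fin n) ℝ)
    (hA : A = ∑ r, θ r • E r) (hθ : Function.Injective θ)
    (hsymm : ∀ r, (E r).IsSymm)
    (hidem : ∀ r, E r * E r = E r)
    (horth : ∀ r s, r ≠ s → E r * E s = 0)
    (hsum : ∑ r, E r = 1)
    (K : Finset (Fin n))
    (Pmin : Finpartition (Finset.univ : Finset (Fin (d + 1))))
    (hcomm : CommutesWithDK E K Pmin)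
    (hmin : ∀ Q : Finpartition (Finset.univ : Finset (Fin (d + 1))),
      CommutesWithDK E K Q → Pmin ≤ Q)
    :
    (Pmin.parts.filter fun C => (∑ r ∈ C, E r) * DKmat K ≠ 0).card ≤ K.card := by
  classical
  set D := DKmat K with hDdef
  have hDD : D * D = D := DKmat_mul_DKmat K
  have hDt : Dᵀ = D := DKmat_transpose K
  set EC : Finset (Fin (d + 1)) → Matrix (Fin n) (Fin n) ℝ := fun C => ∑ r ∈ C, E r with hEC
  set F : Finset (Fin (d + 1)) → Matrix (Fin n) (Fin n) ℝ := fun C => EC C * D with hF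
  set S := Pmin.parts.filter fun C => EC C * D ≠ 0 with hS
  -- orthogonality of class sums
  have hEorth : ∀ C ∈ Pmin.parts, ∀ C' ∈ Pmin.parts, C ≠ C' → EC C * EC C' = 0 := by
    intro C hC C' hC' hne
    have hdis : Disjoint C C' := Pmin.disjoint hC hC' hne
    rw [hEC]
    rw [Finset.sum_mul_sum]
    apply Finset.sum_eq_zero
    intro r hr
    apply Finset.sum_eq_zero
    intro s hs
    refine horth r s ?_
    rintro rfl
    exact Finset.disjoint_left.mp hdis hr hs
  -- F orthogonality
  have hForth : ∀ C ∈ Pmin.parts, ∀ C' ∈ Pmin.parts, C ≠ C' → F C * F C' = 0 := by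
    intro C hC C' hC' hne
    have h1 : EC C' * D = D * EC C' := hcomm C' hC'
    calc F C * F C' = EC C * (D * EC C') * D := by rw [hF]; ring_nf; rw [Matrix.mul_assoc,
          Matrix.mul_assoc, Matrix.mul_assoc]
      _ = EC C * (EC C' * D) * D := by rw [h1]
      _ = (EC C * EC C') * (D * D) := by rw [Matrix.mul_assoc, Matrix.mul_assoc,
          Matrix.mul_assoc]
      _ = 0 := by rw [hEorth C hC C' hC' hne, Matrix.zero_mul]
  -- F is symmetric
  have hECt : ∀ C, (EC C)ᵀ = EC C := by
    intro C
    rw [hEC]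
    simp only [Matrix.transpose_sum]
    exact Finset.sum_congr rfl fun r _ => hsymm r
  have hFt : ∀ C ∈ Pmin.parts, (F C)ᵀ = F C := by
    intro C hC
    rw [hF]
    simp only [Matrix.transpose_mul, hDt, hECt]
    exact (hcomm C hC).symm
  -- F vanishes on rows outside K
  have hFrow : ∀ C ∈ Pmin.parts, ∀ i ∉ K, ∀ j, F C i j = 0 := by
    intro C hC i hi j
    have h1 : D * F C = F C := by
      rw [hF, ← Matrix.mul_assoc, ← hcomm C hC, Matrix.mul_assoc, hDD]
    have h2 := congrFun (congrFun h1 i) j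
    rw [Matrix.mul_apply] at h2
    rw [← h2]
    apply Finset.sum_eq_zero
    intro k _
    rw [hDdef, DKmat_apply_of_not_mem K hi, zero_mul]
  -- choice of nonzero entries
  have hchoose : ∀ C ∈ S, ∃ i j, F C i j ≠ 0 := by
    intro C hC
    have hne : EC C * D ≠ 0 := (Finset.mem_filter.mp hC).2
    by_contra h
    push_neg at h
    apply hne
    ext i j
    exact h i j
  have hchoose' : ∀ C : {x // x ∈ S}, ∃ i j, F C i j ≠ 0 := fun C => hchoose C C.2
  choose I J hIJ using hchoose' 
  -- the vectors
  set w : S → (K → ℝ) := fun C k => F C k (J C) with hw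
  have hSmem : ∀ C : S, (C : Finset (Fin (d + 1))) ∈ Pmin.parts := by
    intro C
    exact (Finset.mem_filter.mp C.2).1
  -- dot products between distinct vectors vanish
  have hdot : ∀ C C' : S, C ≠ C' → dotProduct (w C) (w C') = 0 := by
    intro C C' hne
    have hne' : (C : Finset (Fin (d + 1))) ≠ (C' : Finset (Fin (d + 1))) := by
      exact fun h => hne (Subtype.ext h)
    have key : ∀ i : Fin n, F C i (J C) * F C' i (J C') =
        (F C)ᵀ (J C) i * F C' i (J C') := by
      intro i; rw [Matrix.transpose_apply]
    have hsum2 : ∑ i : Fin n, F C i (J C) * F C' i (J C') = 0 := by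
      have : ∑ i : Fin n, (F C)ᵀ (J C) i * F C' i (J C') = ((F C)ᵀ * F C') (J C) (J C') := by
        rw [Matrix.mul_apply]
      rw [Finset.sum_congr rfl fun i _ => key i, this, hFt C (hSmem C),
        hForth C (hSmem C) C' (hSmem C') hne']
      simp
    have hrestrict : dotProduct (w C) (w C') = ∑ i : Fin n, F C i (J C) * F C' i (J C') := by
      rw [dotProduct]
      have e1 : ∑ i : {x // x ∈ K}, w C i * w C' i
          = ∑ i ∈ K, F (C : Finset (Fin (d + 1))) i (J C)
              * F (C' : Finset (Fin (d + 1))) i (J C') :=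
        Finset.sum_coe_sort K (fun i => F (C : Finset (Fin (d + 1))) i (J C)
          * F (C' : Finset (Fin (d + 1))) i (J C'))
      rw [e1]
      exact Finset.sum_subset (Finset.subset_univ K) (fun i _ hi => by
        rw [hFrow C (hSmem C) i hi (J C), zero_mul])
    rw [hrestrict, hsum2]
  -- each vector is nonzero
  have hwne : ∀ C : S, w C ≠ 0 := by
    intro C hzero
    have hIK : I C ∈ K := by
      by_contra hIK
      exact hIJ C (hFrow C (hSmem C) (I C) hIK (J C))
    have := congrFun hzero ⟨I C, hIK⟩
    exact hIJ C this
  -- linear independence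
  have hli : LinearIndependent ℝ w := by
    rw [Fintype.linearIndependent_iff]
    intro g hg C0
    have h1 : dotProduct (∑ C : S, g C • w C) (w C0) = 0 := by
      rw [hg]; simp
    have h2 : ∑ C : S, g C * dotProduct (w C) (w C0) = 0 := by
      rw [← h1]
      simp only [dotProduct, Finset.mul_sum, Finset.sum_apply, Pi.smul_apply,
        smul_eq_mul, Finset.sum_mul, mul_assoc]
      rw [Finset.sum_comm]
    rw [Finset.sum_eq_single C0] at h2
    · have hne : dotProduct (w C0) (w C0) ≠ 0 := by
        rw [Ne, dotProduct_self_eq_zero]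
        exact hwne C0
      exact (mul_eq_zero.mp h2).resolve_right hne
    · intro C _ hne
      rw [hdot C C0 hne, mul_zero]
    · intro h
      exact absurd (Finset.mem_univ C0) h
  -- conclude
  have hcard : Fintype.card S ≤ Module.finrank ℝ (K → ℝ) := hli.fintype_card_le_finrank
  have hfin : Module.finrank ℝ ({ x // x ∈ K } → ℝ) = K.card := by
    rw [Module.finrank_pi]
    exact Fintype.card_coe K
  rw [hfin] at hcard
  calc S.card = Fintype.card S := (Fintype.card_coe S).symm
    _ ≤ K.card := hcard
end

section
/- For no class C_j of the minimal commuting partition P_min^K does there exist a partition C_j = S_1 ∪ S_2 into nonempty disjoint sets such that E_r D_K E_s = 0 for all r ∈ S_1 and s ∈ S_2. -/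
open Matrix

/-!
Suppose a class `C` splits as `S₁ ∪ S₂` with `E_r D_K E_s = 0` for `r ∈ S₁`, `s ∈ S₂`, and put
`W_i = ∑_{r ∈ S_i} E_r`. Then `W₁ D_K W₂ = 0`, and transposing gives `W₂ D_K W₁ = 0`. Since
`W₁ + W₂` commutes with `D_K` and `W₁, W₂` are orthogonal idempotents,
`W₁ D_K = W₁ (W₁ + W₂) D_K = W₁ D_K (W₁ + W₂) = W₁ D_K W₁` and likewise `D_K W₁ = W₁ D_K W₁`,
so `W₁` and hence `W₂` commute with `D_K`. Replacing `C` by `S₁` and `S₂` then gives a strictly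
finer commuting partition, contradicting minimality.
-/

theorem Commute.of_add_of_mul_eq_zero {R : Type*} [NonUnitalSemiring R] {p q d : R}
    (hp : IsIdempotentElem p) (hpq : p * q = 0) (hqp : q * p = 0)
    (hpdq : p * d * q = 0) (hqdp : q * d * p = 0) (h : Commute (p + q) d) : Commute p d :=
  calc p * d = p * (p + q) * d := by rw [mul_add, hp.eq, hpq, add_zero]
    _ = p * d * (p + q) := by rw [mul_assoc, h.eq, mul_assoc]
    _ = p * d * p := by rw [mul_add, hpdq, add_zero]
    _ = (p + q) * d * p := by rw [add_mul, add_mul, hqdp, add_zero]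
    _ = d * (p + q) * p := by rw [h.eq]
    _ = d * p := by rw [mul_assoc, add_mul, hp.eq, hqp, add_zero]

theorem Finset.sum_mul_mul_sum_eq_zero {ι R : Type*} [NonUnitalNonAssocSemiring R]
    {s t : Finset ι} {f g : ι → R} {d : R} (h : ∀ i ∈ s, ∀ j ∈ t, f i * d * g j = 0) :
    (∑ i ∈ s, f i) * d * ∑ j ∈ t, g j = 0 := by
  rw [Finset.sum_mul, Finset.sum_mul_sum s t (fun i => f i * d) g]
  exact Finset.sum_eq_zero fun i hi => Finset.sum_eq_zero fun j hj => h i hi j hj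

theorem OrthogonalIdempotents.sum_mul_sum_eq_zero_of_disjoint {ι R : Type*} [Semiring R]
    {e : ι → R} (he : OrthogonalIdempotents e) {s t : Finset ι} (hst : Disjoint s t) :
    (∑ i ∈ s, e i) * ∑ j ∈ t, e j = 0 := by
  rw [Finset.sum_mul]
  exact Finset.sum_eq_zero fun _ hi => he.mul_sum_of_notMem (Finset.disjoint_left.1 hst hi)

theorem Matrix.IsSymm.mul_mul_eq_zero_swap {ι R : Type*} [Fintype ι] [CommSemiring R]
    {A B D : Matrix ι ι R} (hA : A.IsSymm) (hB : B.IsSymm) (hD : D.IsSymm)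
    (h : A * D * B = 0) : B * D * A = 0 := by
  simpa [transpose_mul, hA.eq, hB.eq, hD.eq, Matrix.mul_assoc] using congrArg Matrix.transpose h

theorem isSymm_DKmat {n : ℕ} (K : Finset (Fin n)) : (DKmat K).IsSymm := by
  have : DKmat K = diagonal fun i => if i ∈ K then 1 else 0 := by
    ext i j
    by_cases hij : i = j <;> simp [DKmat, hij]
  exact this ▸ isSymm_diagonal _

namespace Finpartition

variable {α : Type*} [DistribLattice α] [OrderBot α] [DecidableEq α] {a C S₁ S₂ : α}

def splitPart (P : Finpartition a) (hC : C ∈ P.parts) (h₁ : S₁ ≠ ⊥) (h₂ : S₂ ≠ ⊥)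
    (hdisj : Disjoint S₁ S₂) (hsup : S₁ ⊔ S₂ = C) : Finpartition a :=
  have hrest : Disjoint C ((P.parts.erase C).sup id) :=
    Finset.supIndep_iff_disjoint_erase.1 P.supIndep C hC
  ((P.ofSubset (P.parts.erase_subset C) rfl).extend h₁
      (hrest.symm.mono_right (hsup ▸ le_sup_left)) rfl).extend h₂
    (disjoint_sup_left.2 ⟨hrest.symm.mono_right (hsup ▸ le_sup_right), hdisj⟩)
    (calc _ = C ⊔ (P.parts.erase C).sup id := by rw [sup_assoc, hsup, sup_comm]
      _ = (insert C (P.parts.erase C)).sup id := (Finset.sup_insert (f := id)).symm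
      _ = a := by rw [Finset.insert_erase hC, P.sup_parts])

variable {P : Finpartition a} {hC : C ∈ P.parts} {h₁ : S₁ ≠ ⊥} {h₂ : S₂ ≠ ⊥}
  {hdisj : Disjoint S₁ S₂} {hsup : S₁ ⊔ S₂ = C}

theorem mem_splitPart {B : α} :
    B ∈ (P.splitPart hC h₁ h₂ hdisj hsup).parts ↔ B = S₂ ∨ B = S₁ ∨ B ≠ C ∧ B ∈ P.parts := by
  simp [splitPart]

theorem not_le_splitPart : ¬ P ≤ P.splitPart hC h₁ h₂ hdisj hsup := by
  intro hle
  obtain ⟨B, hB, hCB⟩ := hle hC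
  rcases mem_splitPart.1 hB with rfl | rfl | ⟨hBC, hB⟩
  · exact h₁ (hdisj.eq_bot_of_le (hsup ▸ le_sup_left |>.trans hCB))
  · exact h₂ (hdisj.symm.eq_bot_of_le (hsup ▸ le_sup_right |>.trans hCB))
  · exact P.ne_bot hC ((P.disjoint hC hB hBC.symm).eq_bot_of_le hCB)

end Finpartition

theorem no_class_splits_general {n d : ℕ} (E : Fin (d + 1) → Matrix (Fin n) (Fin n) ℝ)
    (hsymm : ∀ r, (E r).IsSymm)
    (hidem : ∀ r, E r * E r = E r)
    (horth : ∀ r s, r ≠ s → E r * E s = 0)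
    (K : Finset (Fin n))
    (Pmin : Finpartition (Finset.univ : Finset (Fin (d + 1))))
    (hcomm : CommutesWithDK E K Pmin)
    (hmin : ∀ Q : Finpartition (Finset.univ : Finset (Fin (d + 1))),
      CommutesWithDK E K Q → Pmin ≤ Q)
    :
    ∀ C ∈ Pmin.parts,
      ¬ ∃ S₁ S₂ : Finset (Fin (d + 1)), S₁.Nonempty ∧ S₂.Nonempty ∧
          Disjoint S₁ S₂ ∧ S₁ ∪ S₂ = C ∧
          ∀ r ∈ S₁, ∀ s ∈ S₂, E r * DKmat K * E s = 0 := by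
  rintro C hC ⟨S₁, S₂, hne₁, hne₂, hdisj, hunion, hzero⟩
  have he : OrthogonalIdempotents E := ⟨hidem, fun r s => horth r s⟩
  have h12 : (∑ r ∈ S₁, E r) * DKmat K * ∑ s ∈ S₂, E s = 0 :=
    Finset.sum_mul_mul_sum_eq_zero hzero
  have h21 : (∑ s ∈ S₂, E s) * DKmat K * ∑ r ∈ S₁, E r = 0 :=
    Finset.sum_mul_mul_sum_eq_zero fun s hs r hr =>
      (hsymm r).mul_mul_eq_zero_swap (hsymm s) (isSymm_DKmat K) (hzero r hr s hs)
  have hCD : Commute ((∑ r ∈ S₁, E r) + ∑ s ∈ S₂, E s) (DKmat K) := by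
    rw [← Finset.sum_union hdisj, hunion]
    exact hcomm C hC
  have h₁ : Commute (∑ r ∈ S₁, E r) (DKmat K) :=
    hCD.of_add_of_mul_eq_zero he.isIdempotentElem_sum
      (he.sum_mul_sum_eq_zero_of_disjoint hdisj) (he.sum_mul_sum_eq_zero_of_disjoint hdisj.symm)
      h12 h21
  have h₂ : Commute (∑ s ∈ S₂, E s) (DKmat K) := by simpa using hCD.sub_left h₁
  refine Pmin.not_le_splitPart (hC := hC) (h₁ := hne₁.ne_empty) (h₂ := hne₂.ne_empty)
    (hdisj := hdisj) (hsup := hunion) (hmin _ fun B hB => ?_)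
  rcases Finpartition.mem_splitPart.1 hB with rfl | rfl | ⟨-, hB⟩
  exacts [h₂, h₁, hcomm B hB]

/-- No class of the minimal commuting partition splits into two nonempty parts
`S₁, S₂` with `E_r D_K E_s = 0` for all `r ∈ S₁`, `s ∈ S₂`. -/
theorem no_class_splits {n d : ℕ} (A : Matrix (Fin n) (Fin n) ℝ)
    (θ : Fin (d + 1) → ℝ) (E : Fin (d + 1) → Matrix (Fin n) (Fin n) ℝ)
    (hA : A = ∑ r, θ r • E r) (hθ : Function.Injective θ)
    (hsymm : ∀ r, (E r).IsSymm)
    (hidem : ∀ r, E r * E r = E r)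
    (horth : ∀ r s, r ≠ s → E r * E s = 0)
    (hsum : ∑ r, E r = 1)
    (K : Finset (Fin n))
    (Pmin : Finpartition (Finset.univ : Finset (Fin (d + 1))))
    (hcomm : CommutesWithDK E K Pmin)
    (hmin : ∀ Q : Finpartition (Finset.univ : Finset (Fin (d + 1))),
      CommutesWithDK E K Q → Pmin ≤ Q)
    :
    ∀ C ∈ Pmin.parts,
      ¬ ∃ S₁ S₂ : Finset (Fin (d + 1)), S₁.Nonempty ∧ S₂.Nonempty ∧
          Disjoint S₁ S₂ ∧ S₁ ∪ S₂ = C ∧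
          ∀ r ∈ S₁, ∀ s ∈ S₂, E r * DKmat K * E s = 0 :=
  no_class_splits_general E hsymm hidem horth K Pmin hcomm hmin
end

section
/- K-fractional revival occurs in X (at some time τ > 0) if and only if the eigenvalues of A satisfy the ratio condition with respect to P_min^K, i.e., for any r, s in one class of P_min^K and distinct h, k in one class of P_min^K, the ratio (θ_r − θ_s)/(θ_h − θ_k) is rational. -/
open Matrix

/-!
The complexified spectral idempotents `E r` form a complete family of orthogonal idempotents, so
`f ↦ ∑ r, f r • E r` is an algebra homomorphism from `ι → ℂ`, and `U(τ)` is the image of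
`r ↦ exp (-i τ θ r)`. An element `∑ r, f r • E r` of its range commutes with `D_K` exactly when `f`
is constant on the classes of `P_min^K`: constancy suffices because the class sums commute with
`D_K`; conversely, by Lagrange interpolation every level-set sum `∑_{f r = c} E r` is a polynomial
in `∑ r, f r • E r`, so the level sets of `f` form a commuting partition, which `P_min^K` refines.
Finally `r ↦ exp (-i τ θ r)` is constant on the classes for some `τ > 0` exactly when all
differences `θ r - θ s` within classes are rational multiples of one another: take `τ` to be `2π`
times a common denominator divided by a nonzero difference.
-/

open Finset Real

theorem Finpartition.apply_eq_of_le_ofSetoid_ker {α β : Type*} [Fintype α] [DecidableEq α]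
    {f : α → β} [DecidableRel (Setoid.ker f).r] {P : Finpartition (univ : Finset α)}
    (h : P ≤ Finpartition.ofSetoid (Setoid.ker f)) {C : Finset α} (hC : C ∈ P.parts) {a b : α}
    (ha : a ∈ C) (hb : b ∈ C) : f a = f b := by
  obtain ⟨D, hD, hCD⟩ := h hC
  rw [← Setoid.ker_def, ← Finpartition.mem_part_ofSetoid_iff_rel,
    Finpartition.part_eq_of_mem _ hD (hCD ha)]
  exact hCD hb

namespace CompleteOrthogonalIdempotents

section Lift

variable {ι R A : Type*} [Fintype ι] [DecidableEq ι] [CommSemiring R] [Semiring A] [Algebra R A]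
  {e : ι → A}

def liftPi (he : CompleteOrthogonalIdempotents e) : (ι → R) →ₐ[R] A where
  toFun f := ∑ i, f i • e i
  map_one' := by simpa using he.complete
  map_mul' f g := by
    simp only [Finset.sum_mul_sum, smul_mul_smul_comm, he.mul_eq, smul_ite, smul_zero,
      Finset.sum_ite_eq, Finset.mem_univ, if_true, Pi.mul_apply]
  map_zero' := by simp
  map_add' f g := by simp [add_smul, Finset.sum_add_distrib]
  commutes' c := by
    simp [Algebra.algebraMap_eq_smul_one, ← Finset.smul_sum, he.complete]

theorem liftPi_apply (he : CompleteOrthogonalIdempotents e) (f : ι → R) :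
    he.liftPi f = ∑ i, f i • e i := rfl

end Lift

theorem exp_liftPi {ι A : Type*} [Fintype ι] [DecidableEq ι] [NormedRing A] [NormedAlgebra ℂ A]
    [Algebra ℚ A] {e : ι → A} (he : CompleteOrthogonalIdempotents e) (f : ι → ℂ) :
    NormedSpace.exp (he.liftPi f) = he.liftPi fun i => Complex.exp (f i) := by
  have hcont : Continuous (he.liftPi (R := ℂ)) :=
    continuous_finsetSum _ fun i _ => (continuous_apply i).smul continuous_const
  rw [← NormedSpace.map_exp _ hcont, Pi.exp_def]
  simp only [Complex.exp_eq_exp_ℂ]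

section Field

variable {ι 𝕜 A : Type*} [Fintype ι] [DecidableEq ι] [Field 𝕜] [Ring A] [Algebra 𝕜 A]
  {e : ι → A} (he : CompleteOrthogonalIdempotents e) {f : ι → 𝕜} {x : A}

theorem commute_liftPi_comp (h : Commute (he.liftPi f) x) (g : 𝕜 → 𝕜) :
    Commute (he.liftPi (g ∘ f)) x := by
  obtain ⟨p, hp⟩ : ∃ p : Polynomial 𝕜, ∀ i, p.eval (f i) = g (f i) := by
    classical
    exact ⟨Lagrange.interpolate (univ.image f) id g, fun i =>
      Lagrange.eval_interpolate_at_node g (Set.injOn_id _) (mem_image_of_mem f (mem_univ i))⟩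
  have hgf : g ∘ f = Polynomial.aeval f p := by
    ext i
    simp [hp]
  have hmem : he.liftPi f ∈ Subalgebra.centralizer 𝕜 {x} := by
    simpa [Subalgebra.mem_centralizer_iff] using h.eq.symm
  have := Algebra.adjoin_le (Set.singleton_subset_iff.2 hmem)
    (Polynomial.aeval_mem_adjoin_singleton 𝕜 (he.liftPi f) (p := p))
  rw [hgf, ← Polynomial.aeval_algHom_apply]
  exact ((Subalgebra.mem_centralizer_iff 𝕜).1 this x rfl).symm

theorem commute_sum_of_mem_parts_ofSetoid_ker [DecidableEq 𝕜] (h : Commute (he.liftPi f) x)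
    {C : Finset ι} (hC : C ∈ (Finpartition.ofSetoid (Setoid.ker f)).parts) :
    Commute (∑ i ∈ C, e i) x := by
  rw [Finpartition.ofSetoid, Finpartition.ofSetSetoid_parts, mem_image] at hC
  obtain ⟨a, -, rfl⟩ := hC
  convert he.commute_liftPi_comp h fun z => if f a = z then 1 else 0 using 1
  simp [liftPi_apply, sum_filter, ite_smul, Setoid.ker_def]

theorem commute_liftPi_iff {P : Finpartition (univ : Finset ι)}
    (hP : IsLeast
      {Q : Finpartition (univ : Finset ι) | ∀ C ∈ Q.parts, Commute (∑ i ∈ C, e i) x} P)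
    (f : ι → 𝕜) :
    Commute (he.liftPi f) x ↔ ∀ C ∈ P.parts, ∀ i ∈ C, ∀ j ∈ C, f i = f j := by
  classical
  constructor
  · intro h C hC i hi j hj
    exact Finpartition.apply_eq_of_le_ofSetoid_ker
      (hP.2 fun _ => he.commute_sum_of_mem_parts_ofSetoid_ker h) hC hi hj
  · intro hf
    rw [liftPi_apply, ← P.biUnion_parts, sum_biUnion P.disjoint]
    refine Commute.sum_left _ _ _ fun C hC => ?_
    obtain ⟨a, ha⟩ := P.nonempty_of_mem_parts hC
    rw [id, sum_congr rfl fun i hi => by rw [hf C hC i hi a ha], ← smul_sum]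
    exact (hP.1 C hC).smul_left _

end Field

end CompleteOrthogonalIdempotents

theorem exp_neg_I_mul_eq_iff (τ a b : ℝ) :
    Complex.exp (-Complex.I * τ * a) = Complex.exp (-Complex.I * τ * b) ↔
      ∃ m : ℤ, τ * (a - b) = 2 * π * m := by
  rw [Complex.exp_eq_exp_iff_exists_int]
  constructor
  · rintro ⟨n, hn⟩
    refine ⟨-n, Complex.ofReal_injective ?_⟩
    push_cast
    linear_combination Complex.I * hn + (τ * (a - b) + 2 * π * n : ℂ) * Complex.I_sq
  · rintro ⟨m, hm⟩
    refine ⟨-m, ?_⟩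
    have hm : (τ : ℂ) * (a - b) = 2 * π * m := by exact_mod_cast congrArg Complex.ofReal hm
    push_cast
    linear_combination -Complex.I * hm

theorem exists_pos_mul_eq_two_pi_mul_int {α : Type*} (s : Finset α) (x : α → ℝ) {δ : ℝ}
    (hδ : 0 < δ) (hx : ∀ i ∈ s, ∃ q : ℚ, x i = q * δ) :
    ∃ τ > 0, ∀ i ∈ s, ∃ m : ℤ, τ * x i = 2 * π * m := by
  choose! q hq using hx
  set N := ∏ i ∈ s, (q i).den
  have hN : 0 < N := prod_pos fun i _ => (q i).den_pos
  refine ⟨2 * π * N / δ, by positivity, fun i hi => ?_⟩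
  obtain ⟨t, ht⟩ := dvd_prod_of_mem (fun i => (q i).den) hi
  refine ⟨t * (q i).num, ?_⟩
  have hnum : ((q i).den : ℝ) * q i = (q i).num := by exact_mod_cast Rat.den_mul_eq_num (q i)
  rw [hq i hi, show (N : ℝ) = (q i).den * t by exact_mod_cast ht]
  push_cast
  field_simp
  linear_combination (t : ℝ) * hnum

def RatioCondition {ι : Type*} (θ : ι → ℝ) (S : Finset (Finset ι)) : Prop :=
  ∀ C₁ ∈ S, ∀ C₂ ∈ S, ∀ r ∈ C₁, ∀ s ∈ C₁, ∀ u ∈ C₂, ∀ v ∈ C₂, θ u ≠ θ v →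
    ∃ q : ℚ, θ r - θ s = (q : ℝ) * (θ u - θ v)

theorem RatioCondition.exists_pos_rat_mul {ι : Type*} {θ : ι → ℝ} {S : Finset (Finset ι)}
    (h : RatioCondition θ S) :
    ∃ δ > 0, ∀ C ∈ S, ∀ r ∈ C, ∀ s ∈ C, ∃ q : ℚ, θ r - θ s = q * δ := by
  by_cases hS : ∃ C ∈ S, ∃ u ∈ C, ∃ v ∈ C, θ v < θ u
  · obtain ⟨C₀, hC₀, u, hu, v, hv, hvu⟩ := hS
    exact ⟨θ u - θ v, sub_pos.2 hvu, fun C hC r hr s hs =>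
      h C hC C₀ hC₀ r hr s hs u hu v hv hvu.ne'⟩
  · push Not at hS
    refine ⟨1, one_pos, fun C hC r hr s hs => ⟨0, ?_⟩⟩
    simp [le_antisymm (hS C hC r hr s hs) (hS C hC s hs r hr)]

theorem ratioCondition_iff_exists_exp_eq {ι : Type*} (θ : ι → ℝ) (S : Finset (Finset ι)) :
    RatioCondition θ S ↔ ∃ τ : ℝ, 0 < τ ∧ ∀ C ∈ S, ∀ r ∈ C, ∀ s ∈ C,
      Complex.exp (-Complex.I * τ * θ r) = Complex.exp (-Complex.I * τ * θ s) := by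
  simp only [exp_neg_I_mul_eq_iff]
  constructor
  · intro h
    classical
    obtain ⟨δ, hδ, hq⟩ := h.exists_pos_rat_mul
    obtain ⟨τ, hτ, hm⟩ := exists_pos_mul_eq_two_pi_mul_int (S.biUnion fun C => C ×ˢ C)
      (fun p => θ p.1 - θ p.2) hδ (by simpa using fun r s C hC hr hs => hq C hC r hr s hs)
    exact ⟨τ, hτ, fun C hC r hr s hs => hm (r, s) (by simpa using ⟨C, hC, hr, hs⟩)⟩
  · rintro ⟨τ, hτ, hm⟩ C₁ hC₁ C₂ hC₂ r hr s hs u hu v hv huv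
    obtain ⟨m, hm₁⟩ := hm C₁ hC₁ r hr s hs
    obtain ⟨k, hk⟩ := hm C₂ hC₂ u hu v hv
    have hk0 : (k : ℝ) ≠ 0 := by
      rintro h0
      rw [h0, mul_zero, mul_eq_zero, sub_eq_zero] at hk
      exact hk.elim hτ.ne' huv
    refine ⟨m / k, mul_left_cancel₀ hτ.ne' ?_⟩
    push_cast
    rw [hm₁]
    field_simp
    linear_combination -(m : ℝ) * hk

theorem commutesWithDK_iff {n d : ℕ} {E : Fin (d + 1) → Matrix (Fin n) (Fin n) ℝ}
    {K : Finset (Fin n)} {P : Finpartition (univ : Finset (Fin (d + 1)))} :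
    CommutesWithDK E K P ↔ ∀ C ∈ P.parts,
      Commute (∑ r ∈ C, (E r).map Complex.ofReal) ((DKmat K).map Complex.ofReal) := by
  refine forall₂_congr fun C _ => ?_
  have h := commute_map_iff (f := Complex.ofRealHom.mapMatrix)
    (Matrix.map_injective Complex.ofReal_injective) (x := ∑ r ∈ C, E r) (y := DKmat K)
  rw [map_sum] at h
  exact h.symm

section MatrixExp

attribute [local instance] Matrix.linftyOpNormedRing Matrix.linftyOpNormedAlgebra

theorem transU_eq_liftPi {n : ℕ} {ι : Type*} [Fintype ι] [DecidableEq ι]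
    {A : Matrix (Fin n) (Fin n) ℝ} {θ : ι → ℝ} {E : ι → Matrix (Fin n) (Fin n) ℝ}
    (hA : A = ∑ r, θ r • E r)
    (hE : CompleteOrthogonalIdempotents fun r => (E r).map Complex.ofReal) (τ : ℝ) :
    transU A τ = hE.liftPi fun r => Complex.exp (-Complex.I * τ * θ r) := by
  have hAc : A.map Complex.ofReal = hE.liftPi fun r => (θ r : ℂ) := by
    ext i j
    simp [hA, CompleteOrthogonalIdempotents.liftPi_apply, Matrix.sum_apply]
  rw [transU, hAc, ← map_smul]
  exact hE.exp_liftPi _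

end MatrixExp

theorem kfr_iff_ratio_condition_general {n d : ℕ} (A : Matrix (Fin n) (Fin n) ℝ)
    (θ : Fin (d + 1) → ℝ) (E : Fin (d + 1) → Matrix (Fin n) (Fin n) ℝ)
    (hA : A = ∑ r, θ r • E r)
    (horth : ∀ r s, r ≠ s → E r * E s = 0)
    (hsum : ∑ r, E r = 1)
    (K : Finset (Fin n))
    (Pmin : Finpartition (Finset.univ : Finset (Fin (d + 1))))
    (hcomm : CommutesWithDK E K Pmin)
    (hmin : ∀ Q : Finpartition (Finset.univ : Finset (Fin (d + 1))),
      CommutesWithDK E K Q → Pmin ≤ Q)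
    :
    (∃ τ : ℝ, 0 < τ ∧
        transU A τ * (DKmat K).map Complex.ofReal
          = (DKmat K).map Complex.ofReal * transU A τ) ↔
      (∀ C₁ ∈ Pmin.parts, ∀ C₂ ∈ Pmin.parts,
        ∀ r ∈ C₁, ∀ s ∈ C₁, ∀ u ∈ C₂, ∀ v ∈ C₂, θ u ≠ θ v →
        ∃ q : ℚ, θ r - θ s = (q : ℝ) * (θ u - θ v)) := by
  have hE : CompleteOrthogonalIdempotents fun r => (E r).map Complex.ofReal :=
    (CompleteOrthogonalIdempotents.iff_ortho_complete.2 ⟨fun r s => horth r s, hsum⟩).map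
      (Complex.ofRealHom.mapMatrix : Matrix (Fin n) (Fin n) ℝ →+* _)
  have hP : IsLeast {Q | ∀ C ∈ Q.parts, Commute (∑ r ∈ C, (E r).map Complex.ofReal)
      ((DKmat K).map Complex.ofReal)} Pmin :=
    ⟨commutesWithDK_iff.1 hcomm, fun Q hQ => hmin Q (commutesWithDK_iff.2 hQ)⟩
  change _ ↔ RatioCondition θ Pmin.parts
  rw [ratioCondition_iff_exists_exp_eq]
  refine exists_congr fun τ => and_congr_right fun _ => ?_
  rw [transU_eq_liftPi hA hE]
  exact hE.commute_liftPi_iff hP _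

/-- K-fractional revival occurs in X (at some τ > 0) iff the eigenvalues
satisfy the ratio condition with respect to the minimal commuting partition. -/
theorem kfr_iff_ratio_condition {n d : ℕ} (A : Matrix (Fin n) (Fin n) ℝ)
    (θ : Fin (d + 1) → ℝ) (E : Fin (d + 1) → Matrix (Fin n) (Fin n) ℝ)
    (hA : A = ∑ r, θ r • E r) (hθ : Function.Injective θ)
    (hsymm : ∀ r, (E r).IsSymm)
    (hidem : ∀ r, E r * E r = E r)
    (horth : ∀ r s, r ≠ s → E r * E s = 0)
    (hsum : ∑ r, E r = 1)
    (K : Finset (Fin n))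
    (Pmin : Finpartition (Finset.univ : Finset (Fin (d + 1))))
    (hcomm : CommutesWithDK E K Pmin)
    (hmin : ∀ Q : Finpartition (Finset.univ : Finset (Fin (d + 1))),
      CommutesWithDK E K Q → Pmin ≤ Q)
    :
    (∃ τ : ℝ, 0 < τ ∧
        transU A τ * (DKmat K).map Complex.ofReal
          = (DKmat K).map Complex.ofReal * transU A τ) ↔
      (∀ C₁ ∈ Pmin.parts, ∀ C₂ ∈ Pmin.parts,
        ∀ r ∈ C₁, ∀ s ∈ C₁, ∀ u ∈ C₂, ∀ v ∈ C₂, θ u ≠ θ v →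
        ∃ q : ℚ, θ r - θ s = (q : ℝ) * (θ u - θ v)) :=
  kfr_iff_ratio_condition_general A θ E hA horth hsum K Pmin hcomm hmin
end

section
/- If X is a connected graph and at least two of the K×K submatrices of the class-sum idempotents F_j = Σ_{r∈C_j} E_r are nonzero, then every nonzero such K×K submatrix is a non-diagonal matrix. -/
open Matrix

/-- In a connected graph, if at least two class-sums of the minimal commuting
partition have nonzero `K×K` submatrices, then every nonzero such submatrix is
non-diagonal. -/
theorem nonzero_submatrices_nondiagonal {n d : ℕ} (A : Matrix (Fin n) (Fin n) ℝ)
    (θ : Fin (d + 1) → ℝ) (E : Fin (d + 1) → Matrix (Fin n) (Fin n) ℝ)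
    (hA : A = ∑ r, θ r • E r) (hθ : Function.Injective θ)
    (hsymm : ∀ r, (E r).IsSymm)
    (hidem : ∀ r, E r * E r = E r)
    (horth : ∀ r s, r ≠ s → E r * E s = 0)
    (hsum : ∑ r, E r = 1)
    (K : Finset (Fin n))
    (Pmin : Finpartition (Finset.univ : Finset (Fin (d + 1))))
    (hcomm : CommutesWithDK E K Pmin)
    (hmin : ∀ Q : Finpartition (Finset.univ : Finset (Fin (d + 1))),
      CommutesWithDK E K Q → Pmin ≤ Q)
    (hconn : ∀ a b : Fin n, ∃ k : ℕ, (A ^ k) a b ≠ 0)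
    (htwo : ∃ C₁ ∈ Pmin.parts, ∃ C₂ ∈ Pmin.parts, C₁ ≠ C₂ ∧
      (∃ a ∈ K, ∃ b ∈ K, (∑ r ∈ C₁, E r) a b ≠ 0) ∧
      (∃ a ∈ K, ∃ b ∈ K, (∑ r ∈ C₂, E r) a b ≠ 0)) :
    ∀ C ∈ Pmin.parts, (∃ a ∈ K, ∃ b ∈ K, (∑ r ∈ C, E r) a b ≠ 0) →
      ∃ a ∈ K, ∃ b ∈ K, a ≠ b ∧ (∑ r ∈ C, E r) a b ≠ 0 := by
  intro C hC hCne
  by_contra hcon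
  push_neg at hcon
  obtain ⟨a, ha, b, hb, hab⟩ := hCne
  set F : Matrix (Fin n) (Fin n) ℝ := ∑ r ∈ C, E r with hF
  -- block structure from commuting with DKmat
  have hDdiag : DKmat K = Matrix.diagonal (fun i => if i ∈ K then (1:ℝ) else 0) := by
    ext i j
    simp only [DKmat, Matrix.of_apply, Matrix.diagonal_apply]
    by_cases h : i = j <;> simp [h]
  have key : ∀ x y : Fin n, F x y * (if y ∈ K then (1:ℝ) else 0)
      = (if x ∈ K then (1:ℝ) else 0) * F x y := by
    intro x y
    have h := hcomm C hC
    rw [hDdiag] at h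
    have h2 := congrFun (congrFun h x) y
    rwa [Matrix.mul_diagonal, Matrix.diagonal_mul] at h2
  have hrow0 : ∀ x ∈ K, ∀ y, y ∉ K → F x y = 0 := by
    intro x hx y hy
    have h := key x y
    simp only [if_pos hx, if_neg hy, mul_zero, one_mul] at h
    exact h.symm
  have hcol0 : ∀ x, x ∉ K → ∀ y ∈ K, F x y = 0 := by
    intro x hx y hy
    have h := key x y
    simp only [if_pos hy, if_neg hx, mul_one, zero_mul] at h
    exact h
  -- the nonzero entry is on the diagonal
  have hab' : a = b := by
    by_contra hne
    exact hab (hcon a ha b hb hne)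
  subst hab'
  -- pick the second class
  obtain ⟨C₁, hC₁, C₂, hC₂, h12, hn1, hn2⟩ := htwo
  obtain ⟨C', hC', hCC', a₂, ha₂, b₂, hb₂, hF'⟩ :
      ∃ C' ∈ Pmin.parts, C' ≠ C ∧ ∃ a₂ ∈ K, ∃ b₂ ∈ K, (∑ r ∈ C', E r) a₂ b₂ ≠ 0 := by
    by_cases h : C₁ = C
    · exact ⟨C₂, hC₂, by rw [← h]; exact h12.symm, hn2⟩
    · exact ⟨C₁, hC₁, h, hn1⟩
  have hdis : Disjoint C C' := Pmin.disjoint hC hC' (Ne.symm hCC')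
  -- algebraic identities
  have hEF : ∀ r, E r * F = if r ∈ C then E r else 0 := by
    intro r
    rw [hF, Finset.mul_sum]
    by_cases hr : r ∈ C
    · rw [if_pos hr,
        Finset.sum_eq_single_of_mem r hr fun s _ hsr => horth r s fun he => hsr he.symm]
      exact hidem r
    · rw [if_neg hr]
      exact Finset.sum_eq_zero fun s hs => horth r s (by rintro rfl; exact hr hs)
  have hFE : ∀ r, F * E r = if r ∈ C then E r else 0 := by
    intro r
    rw [hF, Finset.sum_mul]
    by_cases hr : r ∈ C
    · rw [if_pos hr, Finset.sum_eq_single_of_mem r hr fun s _ hsr => horth s r hsr]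
      exact hidem r
    · rw [if_neg hr]
      exact Finset.sum_eq_zero fun s hs => horth s r (by rintro rfl; exact hr hs)
  have hFF : F * F = F := by
    nth_rewrite 1 [hF]
    rw [Finset.sum_mul]
    nth_rewrite 2 [hF]
    refine Finset.sum_congr rfl fun r hr => ?_
    rw [hEF r, if_pos hr]
  have horthF : F * (∑ r ∈ C', E r) = 0 := by
    rw [hF, Finset.sum_mul]
    refine Finset.sum_eq_zero fun r hr => ?_
    rw [Finset.mul_sum]
    refine Finset.sum_eq_zero fun s hs => ?_
    exact horth r s (by rintro rfl; exact (Finset.disjoint_left.mp hdis hr) hs)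
  have hAF : A * F = F * A := by
    rw [hA, Finset.sum_mul, Finset.mul_sum]
    refine Finset.sum_congr rfl fun r _ => ?_
    rw [smul_mul_assoc, mul_smul_comm, hEF r, hFE r]
  have hcAF : Commute A F := hAF
  have hAFk : ∀ k : ℕ, A ^ k * F = F * A ^ k := fun k => (hcAF.pow_left k).eq
  -- row structure of F
  have hrowF : ∀ x ∈ K, ∀ c, c ≠ x → F x c = 0 := by
    intro x hx c hcx
    by_cases hc : c ∈ K
    · exact hcon x hx c hc (Ne.symm hcx)
    · exact hrow0 x hx c hc
  have hmulrow : ∀ (M : Matrix (Fin n) (Fin n) ℝ), ∀ x ∈ K, ∀ y,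
      (F * M) x y = F x x * M x y := by
    intro M x hx y
    rw [Matrix.mul_apply]
    rw [Finset.sum_eq_single x (fun c _ hcx => by rw [hrowF x hx c hcx, zero_mul])
      (fun h => absurd (Finset.mem_univ x) h)]
  have haa : F a a = 1 := by
    have h1 : F a a = F a a * F a a := by
      nth_rewrite 1 [← hFF]
      exact hmulrow F a ha a
    have h2 : F a a * 1 = F a a * F a a := by rw [mul_one]; exact h1
    exact (mul_left_cancel₀ hab h2).symm
  have ha2 : F a₂ a₂ = 0 := by
    have h0 : (F * (∑ r ∈ C', E r)) a₂ b₂ = 0 := by rw [horthF]; simp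
    rw [hmulrow (∑ r ∈ C', E r) a₂ ha₂ b₂] at h0
    exact (mul_eq_zero.mp h0).resolve_right hF'
  have hrowa2 : ∀ c, F a₂ c = 0 := by
    intro c
    by_cases h : c = a₂
    · rw [h]; exact ha2
    · exact hrowF a₂ ha₂ c h
  have hcolF : ∀ c, F c a = if c = a then 1 else 0 := by
    intro c
    by_cases h : c = a
    · rw [if_pos h, h]; exact haa
    · rw [if_neg h]
      by_cases hc : c ∈ K
      · exact hcon c hc a ha h
      · exact hcol0 c hc a ha
  -- contradiction with connectedness
  obtain ⟨k, hk⟩ := hconn a₂ a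
  apply hk
  have h1 : (A ^ k * F) a₂ a = (A ^ k) a₂ a := by
    rw [Matrix.mul_apply]
    rw [Finset.sum_eq_single a (fun c _ hca => by rw [hcolF c, if_neg hca, mul_zero])
      (fun h => absurd (Finset.mem_univ a) h)]
    rw [hcolF a, if_pos rfl, mul_one]
  have h2 : (F * A ^ k) a₂ a = 0 := by
    rw [Matrix.mul_apply]
    exact Finset.sum_eq_zero fun c _ => by rw [hrowa2 c, zero_mul]
  rw [← h1, hAFk k, h2]
end
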